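/- arXiv:math/9802112 — 4 statements merged into one kernel-verified Lean document; each statement's English description precedes it below -/
import Mathlib

section
/- Let K = k((u))((t)) be a two-dimensional local field over a field k. For ω ∈ Ω̃²_{K/k}, write ω = Σ_i u^i du ∧ ω_i(t) with ω_i(t) ∈ Ω̃¹_{k((t))/k}, and define res_u(ω) = ω_{-1}(t). Then res_u does not depend on the choice of the local parameter u ∈ k[[u,t]] (with fixed embedding k((t)) ↪ K), i.e., if u' ∈ k[[u,t]] is another element whose image in k((u)) has valuation 1, then res_{u'}(ω) = res_u(ω) for all ω. -/
noncomputable section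

abbrev LS (k : Type) [Field k] := LaurentSeries k
abbrev LS2 (k : Type) [Field k] := LaurentSeries (LaurentSeries k)

/-- Formal derivative of a Laurent series. -/
def lsDeriv {R : Type} [AddCommGroup R] (f : LaurentSeries R) : LaurentSeries R where
  coeff n := (n + 1) • f.coeff (n + 1)
  isPWO_support' := by
    have h : (Function.support fun n : ℤ => (n + 1) • f.coeff (n + 1)) ⊆
        (fun n : ℤ => n - 1) '' (Function.support f.coeff) := by
      intro n hn
      refine ⟨n + 1, ?_, by ring⟩
      intro h0
      simp [Function.mem_support, h0] at hn
    exact (f.isPWO_support'.image_of_monotone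
      (fun a b hab => by dsimp; omega : Monotone fun n : ℤ => n - 1)).mono h

lemma lsDeriv_zero {R : Type} [AddCommGroup R] : lsDeriv (0 : LaurentSeries R) = 0 := by
  ext n
  simp [lsDeriv]

variable {k : Type} [Field k]

/-- ∂/∂u on k((u))((t)) (outer variable t, inner variable u): coefficientwise derivative. -/
def uDeriv (f : LS2 k) : LS2 k where
  coeff j := lsDeriv (f.coeff j)
  isPWO_support' := by
    refine f.isPWO_support'.mono ?_
    intro j hj
    simp only [Function.mem_support] at hj ⊢
    intro h0
    exact hj (by rw [h0, lsDeriv_zero])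

/-- ∂/∂t on k((u))((t)): derivative in the outer variable. -/
def tDeriv (f : LS2 k) : LS2 k := lsDeriv f

/-- res_u : extracts the coefficient of u^(-1), giving a Laurent series in t. -/
def resU (f : LS2 k) : LS k where
  coeff j := (f.coeff j).coeff (-1)
  isPWO_support' := by
    refine f.isPWO_support'.mono ?_
    intro j hj
    simp only [Function.mem_support] at hj ⊢
    intro h0
    exact hj (by rw [h0]; simp)

/-- One-dimensional residue: coefficient of τ^(-1). -/
def res1 (f : LS k) : k := f.coeff (-1)

/-- Two-dimensional residue: coefficient of u^(-1) t^(-1). -/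
def res2 (f : LS2 k) : k := (f.coeff (-1)).coeff (-1)

/-- The embedding of k((t)) into k((u))((t)) (constants in u). -/
def ofT (g : LS k) : LS2 k where
  coeff j := HahnSeries.C (g.coeff j)
  isPWO_support' := by
    refine g.isPWO_support'.mono ?_
    intro j hj
    simp only [Function.mem_support] at hj ⊢
    intro h0
    exact hj (by rw [h0, map_zero])

/-- The element u of k((u))((t)). -/
def uElem : LS2 k := HahnSeries.single 0 (HahnSeries.single 1 1)

/-- The element t of k((u))((t)). -/
def tElem : LS2 k := HahnSeries.single 1 1

/-- The coefficient of du ∧ dt in (dφ/φ) ∧ (dψ/ψ). -/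
def wedge (φ ψ : LS2 k) : LS2 k :=
  (φ * ψ)⁻¹ * (uDeriv φ * tDeriv ψ - tDeriv φ * uDeriv ψ)

/-- Membership in the group of principal units E¹ = 1 + u·k[[u]] + t·k((u))[[t]]. -/
def memE1 (φ : LS2 k) : Prop :=
  (∀ j < 0, φ.coeff j = 0) ∧ (∀ i < 0, (φ.coeff 0).coeff i = 0) ∧ (φ.coeff 0).coeff 0 = 1

/-- Membership in m = u·k[[u]] + t·k((u))[[t]]. -/
def memM (x : LS2 k) : Prop :=
  (∀ j < 0, x.coeff j = 0) ∧ (∀ i ≤ 0, (x.coeff 0).coeff i = 0)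

/-- Partial sums of the logarithm series of φ = 1 + x. -/
def partialLog (φ : LS2 k) (n : ℕ) : LS2 k :=
  ∑ m ∈ Finset.Icc 1 n, ((-1 : LS2 k) ^ (m + 1) * (m : LS2 k)⁻¹) * (φ - 1) ^ m

/-- `L` is the logarithm of `φ`: every coefficient of the partial sums of the log series
is eventually equal to the corresponding coefficient of `L` (convergence in the topology of
the two-dimensional local field). -/
def IsLogOf (φ L : LS2 k) : Prop :=
  ∀ a b : ℤ, ∃ N : ℕ, ∀ n ≥ N, ((partialLog φ n).coeff b).coeff a = (L.coeff b).coeff a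

/-- Partial sums of the exponential series. -/
def partialExp (x : LS2 k) (n : ℕ) : LS2 k :=
  ∑ m ∈ Finset.range (n + 1), ((Nat.factorial m : LS2 k))⁻¹ * x ^ m

/-- `E` is the exponential of `x`, coefficientwise. -/
def IsExpOf (x E : LS2 k) : Prop :=
  ∀ a b : ℤ, ∃ N : ℕ, ∀ n ≥ N, ((partialExp x n).coeff b).coeff a = (E.coeff b).coeff a

/-- Partial sums of the exponential series in the one-dimensional field k((t)). -/
def partialExp1 (x : LS k) (n : ℕ) : LS k :=
  ∑ m ∈ Finset.range (n + 1), ((Nat.factorial m : LS k))⁻¹ * x ^ m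

/-- `E` is the exponential of `x` in k((t)), coefficientwise. -/
def IsExpOf1 (x E : LS k) : Prop :=
  ∀ a : ℤ, ∃ N : ℕ, ∀ n ≥ N, (partialExp1 x n).coeff a = E.coeff a

/-- The tame symbol of the local field k((t)). -/
def tame1 (φ ψ : LS k) : k :=
  (-1 : k) ^ (φ.order * ψ.order) * (φ ^ ψ.order * ψ ^ (-φ.order)).coeff 0


/-! The `i`-th term of `ω = Σ_i u'^i du' ∧ c_i dt` has `res_u` equal to `res_u(u'^i ∂u'/∂u) · c_i`.
For `i ≠ -1` the form `u'^i ∂u'/∂u = ∂(u'^(i+1))/∂u / (i+1)` is a `u`-derivative, so it has no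
`u⁻¹` term. For `i = -1`, factor `u' = v · (1 - x)` with `v ∈ k((u))` of valuation `1` and
`x ∈ t·k((u))[[t]]`. The logarithmic derivative of `v` has residue `ord v = 1`. Modulo any power
`t^N`, the logarithmic derivative of `1 - x` is the derivative of the truncated logarithm
`-Σ_{i ≤ N} x^i / i`, so its residue vanishes. -/

namespace HahnSeries

theorem coeff_mul_add_coeff_mul_of_support_subset {Γ R : Type*} [AddCommMonoid Γ] [LinearOrder Γ]
    [IsOrderedCancelAddMonoid Γ] [NonUnitalNonAssocSemiring R] {x x' y y' : HahnSeries Γ R}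
    (hx : x'.support ⊆ x.support) (hy : y'.support ⊆ y.support) (a : Γ) :
    (x' * y).coeff a + (x * y').coeff a =
      ∑ ij ∈ Finset.antidiagonal x.isPWO_support y.isPWO_support a,
        (x'.coeff ij.1 * y.coeff ij.2 + x.coeff ij.1 * y'.coeff ij.2) := by
  rw [coeff_mul_left' x.isPWO_support hx, coeff_mul_right' y.isPWO_support hy,
    ← Finset.sum_add_distrib]

theorem coeff_pow_mul_eq_zero_of_lt {R : Type*} [Semiring R] {x y : HahnSeries ℤ R}
    (hx : 1 ≤ x.orderTop) {n : ℕ} {b : ℤ} (hb : b < n + y.order) : (x ^ n * y).coeff b = 0 := by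
  apply coeff_eq_zero_of_lt_orderTop
  have hy : (y.order : WithTop ℤ) ≤ y.orderTop := by
    rcases eq_or_ne y 0 with rfl | hy
    · simp
    · exact (order_eq_orderTop_of_ne_zero hy).le
  calc (b : WithTop ℤ) < n • (1 : WithTop ℤ) + y.order := by
        rw [nsmul_one]
        exact_mod_cast hb
    _ ≤ n • x.orderTop + y.orderTop := add_le_add (nsmul_le_nsmul_right hx n) hy
    _ ≤ (x ^ n).orderTop + y.orderTop := add_le_add_left orderTop_nsmul_le_orderTop_pow _
    _ ≤ (x ^ n * y).orderTop := orderTop_add_le_mul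

end HahnSeries

theorem Derivation.inv_smul_map_mul {R K M : Type*} [CommRing R] [Field K] [Algebra R K]
    [AddCommGroup M] [Module K M] [Module R M] (D : Derivation R K M) {a b : K} (ha : a ≠ 0)
    (hb : b ≠ 0) : (a * b)⁻¹ • D (a * b) = a⁻¹ • D a + b⁻¹ • D b := by
  rw [D.leibniz, smul_add, smul_smul, smul_smul, add_comm]
  congr 2 <;> field_simp

namespace LaurentSeries

open HahnSeries

section CommRing

variable {R : Type} [CommRing R]

def euler (f : LaurentSeries R) : LaurentSeries R where
  coeff n := n • f.coeff n
  isPWO_support' :=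
    f.isPWO_support.mono (Function.support_smul_subset_right (fun n : ℤ => n) f.coeff)

@[simp]
theorem coeff_euler (f : LaurentSeries R) (n : ℤ) : (euler f).coeff n = n • f.coeff n := rfl

theorem support_euler_subset (f : LaurentSeries R) : (euler f).support ⊆ f.support :=
  Function.support_smul_subset_right (fun n : ℤ => n) f.coeff

theorem euler_mul (f g : LaurentSeries R) : euler (f * g) = euler f * g + f * euler g := by
  ext n
  rw [coeff_add, coeff_mul_add_coeff_mul_of_support_subset (support_euler_subset f)
    (support_euler_subset g), coeff_euler, coeff_mul, Finset.smul_sum]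
  refine Finset.sum_congr rfl fun ij hij => ?_
  rw [(Finset.mem_antidiagonal.mp hij).2.2.symm]
  simp only [coeff_euler, add_smul, smul_mul_assoc, mul_smul_comm]

@[simp]
theorem coeff_lsDeriv (f : LaurentSeries R) (n : ℤ) :
    (lsDeriv f).coeff n = (n + 1) • f.coeff (n + 1) := rfl

theorem lsDeriv_eq_single_mul_euler (f : LaurentSeries R) :
    lsDeriv f = single (-1) 1 * euler f := by
  ext n
  simp [coeff_single_mul]

theorem lsDeriv_add (f g : LaurentSeries R) : lsDeriv (f + g) = lsDeriv f + lsDeriv g := by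
  ext n
  simp [smul_add]

theorem lsDeriv_mul (f g : LaurentSeries R) :
    lsDeriv (f * g) = lsDeriv f * g + f * lsDeriv g := by
  simp only [lsDeriv_eq_single_mul_euler, euler_mul]
  ring

variable (R) in
def lsDerivation : Derivation ℤ (LaurentSeries R) (LaurentSeries R) where
  toFun := lsDeriv
  map_add' := lsDeriv_add
  map_smul' n f := by
    simp only [Algebra.smul_def, eq_intCast, ← zsmul_eq_mul]
    exact map_zsmul (AddMonoidHom.mk' lsDeriv lsDeriv_add) n f
  map_one_eq_zero' := by
    ext n
    by_cases h : n + 1 = 0 <;> simp [coeff_one, h]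
  leibniz' f g := by
    simp only [LinearMap.coe_mk, AddHom.coe_mk, lsDeriv_mul, smul_eq_mul]
    ring

@[simp]
theorem lsDerivation_apply (f : LaurentSeries R) : lsDerivation R f = lsDeriv f := rfl

theorem lsDeriv_one : lsDeriv (1 : LaurentSeries R) = 0 := (lsDerivation R).map_one_eq_zero

theorem lsDeriv_single (n : ℤ) (r : R) : lsDeriv (single n r) = single (n - 1) (n • r) := by
  ext m
  rcases eq_or_ne m (n - 1) with rfl | hm
  · simp
  · rw [coeff_lsDeriv, coeff_single_of_ne (by omega), coeff_single_of_ne hm, smul_zero]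

theorem zero_le_orderTop_lsDeriv {f : LaurentSeries R} (hf : 0 ≤ f.orderTop) :
    0 ≤ (lsDeriv f).orderTop := by
  rw [le_orderTop_iff_forall] at hf ⊢
  intro j hj
  have hj : j < 0 := by exact_mod_cast hj
  rw [coeff_lsDeriv]
  rcases eq_or_ne (j + 1) 0 with h | h
  · rw [h, zero_smul]
  · rw [hf (j + 1) (by norm_cast; omega), smul_zero]

end CommRing

variable {F : Type} [Field F]

theorem coeff_neg_one_single_inv_mul_lsDeriv (n : ℤ) :
    ((single n (1 : F))⁻¹ * lsDeriv (single n 1)).coeff (-1) = (n : F) := by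
  have hinv : (single n (1 : F))⁻¹ = single (-n) 1 :=
    inv_eq_of_mul_eq_one_left (by rw [single_mul_single]; simp)
  rw [hinv, lsDeriv_single, single_mul_single, show -n + (n - 1) = -1 by ring]
  simp

theorem coeff_neg_one_inv_mul_lsDeriv (v : LaurentSeries F) :
    (v⁻¹ * lsDeriv v).coeff (-1) = v.order := by
  rcases eq_or_ne v 0 with rfl | hv
  · simp [lsDeriv_zero]
  set P : LaurentSeries F := single (-v.order) 1 * v with hP
  have hvP : v = single v.order 1 * P := by
    rw [hP, ← mul_assoc, single_mul_single]
    simp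
  have hP0 : P.orderTop = 0 := by
    rw [hP, orderTop_mul, orderTop_single one_ne_zero, ← order_eq_orderTop_of_ne_zero hv]
    norm_cast
    simp
  have hPne : P ≠ 0 := by
    rintro h
    simp [h] at hP0
  have hPinv : 0 ≤ P⁻¹.orderTop := by
    have h := orderTop_mul P⁻¹ P
    rw [inv_mul_cancel₀ hPne, orderTop_one, hP0, add_zero] at h
    exact h.le
  have hdlog := (lsDerivation F).inv_smul_map_mul (single_ne_zero (a := v.order) one_ne_zero) hPne
  simp only [smul_eq_mul, lsDerivation_apply] at hdlog
  conv_lhs => rw [hvP]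
  rw [hdlog, coeff_add, coeff_neg_one_single_inv_mul_lsDeriv, coeff_eq_zero_of_lt_orderTop,
    add_zero]
  calc ((-1 : ℤ) : WithTop ℤ) < 0 := by exact_mod_cast neg_one_lt_zero
    _ ≤ P⁻¹.orderTop + (lsDeriv P).orderTop := add_nonneg hPinv (zero_le_orderTop_lsDeriv hP0.ge)
    _ ≤ (P⁻¹ * lsDeriv P).orderTop := orderTop_add_le_mul

end LaurentSeries

open HahnSeries LaurentSeries

@[simp]
theorem coeff_uDeriv (f : LS2 k) (j : ℤ) : (uDeriv f).coeff j = lsDeriv (f.coeff j) := rfl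

theorem support_uDeriv_subset (f : LS2 k) : (uDeriv f).support ⊆ f.support := fun j hj h0 =>
  hj (by rw [coeff_uDeriv, h0, lsDeriv_zero])

theorem uDeriv_add (f g : LS2 k) : uDeriv (f + g) = uDeriv f + uDeriv g := by
  ext j : 2
  simp only [coeff_uDeriv, coeff_add, lsDeriv_add]

theorem uDeriv_mul (f g : LS2 k) : uDeriv (f * g) = uDeriv f * g + f * uDeriv g := by
  ext j : 2
  rw [coeff_add, coeff_mul_add_coeff_mul_of_support_subset (support_uDeriv_subset f)
    (support_uDeriv_subset g), coeff_uDeriv, coeff_mul, ← lsDerivation_apply, map_sum]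
  simp only [lsDerivation_apply, lsDeriv_mul, coeff_uDeriv]

theorem uDeriv_C (v : LS k) : uDeriv (C v) = C (lsDeriv v) := by
  ext j : 2
  rcases eq_or_ne j 0 with rfl | hj
  · simp
  · simp [C_apply, coeff_single_of_ne hj, lsDeriv_zero]

variable (k) in
def uDerivation : Derivation ℤ (LS2 k) (LS2 k) where
  toFun := uDeriv
  map_add' := uDeriv_add
  map_smul' n f := by
    simp only [Algebra.smul_def, eq_intCast, ← zsmul_eq_mul]
    exact map_zsmul (AddMonoidHom.mk' uDeriv uDeriv_add) n f
  map_one_eq_zero' := by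
    ext j : 2
    by_cases h : j = 0 <;> simp [coeff_one, h, lsDeriv_zero, lsDeriv_one]
  leibniz' f g := by
    simp only [LinearMap.coe_mk, AddHom.coe_mk, uDeriv_mul, smul_eq_mul]
    ring

@[simp]
theorem uDerivation_apply (f : LS2 k) : uDerivation k f = uDeriv f := rfl

@[simp]
theorem coeff_resU (f : LS2 k) (j : ℤ) : (resU f).coeff j = (f.coeff j).coeff (-1) := rfl

theorem support_resU_subset (f : LS2 k) : (resU f).support ⊆ f.support := fun j hj h0 =>
  hj (by rw [coeff_resU, h0, coeff_zero])

theorem resU_add (f g : LS2 k) : resU (f + g) = resU f + resU g := by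
  ext j
  simp

theorem resU_neg (f : LS2 k) : resU (-f) = -resU f := by
  ext j
  simp

theorem resU_sum {ι : Type*} (s : Finset ι) (f : ι → LS2 k) :
    resU (∑ i ∈ s, f i) = ∑ i ∈ s, resU (f i) := by
  ext j
  simp [coeff_sum]

theorem resU_zsmul (n : ℤ) (f : LS2 k) : resU (n • f) = n • resU f := by
  ext j
  simp only [coeff_resU, coeff_smul]

theorem resU_uDeriv (f : LS2 k) : resU (uDeriv f) = 0 := by
  ext j
  simp

theorem resU_C (v : LS k) : resU (C v) = C (v.coeff (-1)) := by
  ext j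
  rcases eq_or_ne j 0 with rfl | hj
  · simp
  · simp [C_apply, coeff_single_of_ne hj]

theorem support_ofT_subset (h : LS k) : (ofT h).support ⊆ h.support := fun j hj h0 =>
  hj (by simp [ofT, h0])

theorem resU_mul_ofT (f : LS2 k) (h : LS k) : resU (f * ofT h) = resU f * h := by
  ext b
  rw [coeff_resU, coeff_mul_right' h.isPWO_support (support_ofT_subset h),
    coeff_mul_left' f.isPWO_support (support_resU_subset f), coeff_sum]
  simp [ofT, C_apply, coeff_mul_single]

theorem resU_zpow_mul_uDeriv [CharZero k] (f : LS2 k) {i : ℤ} (hi : i ≠ -1) :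
    resU (f ^ i * uDeriv f) = 0 := by
  have h := congrArg resU ((uDerivation k).leibniz_zpow f (i + 1))
  rw [add_sub_cancel_right, smul_eq_mul, uDerivation_apply, uDerivation_apply, resU_uDeriv,
    resU_zsmul] at h
  ext j
  have hj := congrArg (·.coeff j) h
  simp only [coeff_zero, coeff_smul] at hj
  exact (smul_eq_zero.mp hj.symm).resolve_left (by omega)

theorem resU_inv_one_sub_mul_uDeriv [CharZero k] {x : LS2 k} (hx : 1 ≤ x.orderTop) :
    resU ((1 - x)⁻¹ * uDeriv x) = 0 := by
  set F := (1 - x)⁻¹ * uDeriv x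
  have hx0 : x.coeff 0 = 0 :=
    coeff_eq_zero_of_lt_orderTop (lt_of_lt_of_le (by exact_mod_cast zero_lt_one) hx)
  have hne : 1 - x ≠ 0 := fun h => by simpa [hx0] using congrArg (·.coeff 0) h
  have hgeom (N : ℕ) : F = ∑ i ∈ Finset.range N, x ^ i * uDeriv x + x ^ N * F := by
    rw [← Finset.sum_mul]
    linear_combination (-F) * mul_neg_geom_sum x N +
      ((∑ i ∈ Finset.range N, x ^ i) * uDeriv x) * inv_mul_cancel₀ hne
  ext b
  -- with this `N` the remainder `x ^ N * F` starts beyond `t ^ b`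
  rw [hgeom (b - F.order + 1).toNat, resU_add, resU_sum, coeff_add, coeff_resU,
    coeff_pow_mul_eq_zero_of_lt hx (by omega)]
  simp [← zpow_natCast, resU_zpow_mul_uDeriv]

theorem resU_inv_mul_uDeriv [CharZero k] {f : LS2 k} (hf : 0 ≤ f.orderTop)
    (h0 : f.coeff 0 ≠ 0) : resU (f⁻¹ * uDeriv f) = ((f.coeff 0).order : LS k) := by
  set v := f.coeff 0 with hv
  set x : LS2 k := 1 - C v⁻¹ * f with hx
  have hfx : f = C v * (1 - x) := by
    rw [hx, sub_sub_cancel, ← mul_assoc, ← map_mul, mul_inv_cancel₀ h0, map_one, one_mul]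
  have hne : 1 - x ≠ 0 := by
    rw [hx, sub_sub_cancel]
    exact mul_ne_zero (C_ne_zero (inv_ne_zero h0)) fun h => h0 (by simp [v, h])
  have hx1 : 1 ≤ x.orderTop := by
    rw [le_orderTop_iff_forall]
    intro j hj
    have hj : j ≤ 0 := by
      have : j < 1 := by exact_mod_cast hj
      omega
    rcases hj.lt_or_eq with hj | rfl
    · simp [hx, coeff_one, hj.ne, le_orderTop_iff_forall.mp hf j (by exact_mod_cast hj)]
    · simp [hx, ← hv, inv_mul_cancel₀ h0]
  have hdx : (1 - x)⁻¹ * uDeriv (1 - x) = -((1 - x)⁻¹ * uDeriv x) := by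
    rw [← uDerivation_apply, map_sub, Derivation.map_one_eq_zero, zero_sub, uDerivation_apply]
    ring
  have hdlog := (uDerivation k).inv_smul_map_mul (C_ne_zero h0) hne
  simp only [smul_eq_mul, uDerivation_apply] at hdlog
  rw [hfx, hdlog, resU_add, hdx, resU_neg, resU_inv_one_sub_mul_uDeriv hx1, neg_zero, add_zero,
    ← map_inv₀, uDeriv_C, ← map_mul, resU_C, coeff_neg_one_inv_mul_lsDeriv, map_intCast]

/-- `ω = g du ∧ dt` is represented by `g`. As `du' ∧ dt = (∂u'/∂u) du ∧ dt`, `hsum` expands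
`ω = Σ_i u'^i du' ∧ c_i dt` coefficientwise. -/
theorem res_u_independent_of_parameter_general (k : Type) [Field k] [CharZero k]
    (u' : LS2 k)
    (hI : ∀ j i : ℤ, (j < 0 ∨ i < 0) → (u'.coeff j).coeff i = 0)
    (hval : (u'.coeff 0).order = 1)
    (g : LS2 k) (c : ℤ → LS k)
    (hsum : ∀ a b : ℤ,
      (g.coeff b).coeff a = ∑ᶠ i : ℤ, (((u' ^ i * uDeriv u' * ofT (c i)).coeff b).coeff a)) :
    c (-1) = resU g := by
  have hu' : 0 ≤ u'.orderTop := le_orderTop_iff_forall.mpr fun j hj => by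
    ext i
    exact hI j i (Or.inl (by exact_mod_cast hj))
  have h0 : u'.coeff 0 ≠ 0 := fun h => by simp [h] at hval
  ext b
  rw [coeff_resU, hsum, finsum_eq_single _ (-1) fun i hi => ?_]
  · rw [← coeff_resU, resU_mul_ofT, zpow_neg_one, resU_inv_mul_uDeriv hu' h0, hval, Int.cast_one,
      one_mul]
  · rw [← coeff_resU, resU_mul_ofT, resU_zpow_mul_uDeriv u' hi, zero_mul, coeff_zero]

/-- independence of res_u from the choice of the local parameter u.
Let u' ∈ I = k[[u,t]] be another local parameter (its image in k((u)) = K̄ has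
valuation 1).  If ω = g·du∧dt ∈ Ω̃²_{K/k} also admits a (t-adically and u-adically
convergent, coefficientwise) expansion ω = Σ_i (u')^i du' ∧ (c_i dt), then the residue
computed in the parameter u', namely c₋₁, coincides with res_u(ω) = res_u(g). -/
theorem res_u_independent_of_parameter (k : Type) [Field k] [CharZero k]
    (u' : LS2 k)
    (hI : ∀ j i : ℤ, (j < 0 ∨ i < 0) → (u'.coeff j).coeff i = 0)
    (hval : (u'.coeff 0).order = 1) (hne : u'.coeff 0 ≠ 0)
    (g : LS2 k) (c : ℤ → LS k)
    (hbd : ∃ N : ℤ, ∀ i < N, c i = 0)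
    (hfin : ∀ a b : ℤ,
      {i : ℤ | (((u' ^ i * uDeriv u' * ofT (c i)).coeff b).coeff a) ≠ 0}.Finite)
    (hsum : ∀ a b : ℤ,
      (g.coeff b).coeff a = ∑ᶠ i : ℤ, (((u' ^ i * uDeriv u' * ofT (c i)).coeff b).coeff a)) :
    c (-1) = resU g :=
  res_u_independent_of_parameter_general k u' hI hval g c hsum
end
end

section
/- Let K = k((τ)) with k of characteristic 0. If ζ ∈ K* satisfies (ζ, ξ)_K = 1 for all ξ ∈ K* and (ζ; ξ]_K := res_{K/k}(ξ · dζ/ζ) = 0 for all ξ ∈ K, then ζ = 1. Equivalently: the pair of pairings given by the tame symbol (·,·)_K : K*×K* → k* and the pairing (ζ; ξ]_K = res(ξ dζ/ζ) : K* × K → k jointly separate elements of K*. -/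
noncomputable section

variable {k : Type} [Field k]

set_option maxHeartbeats 1000000 in
/-- the tame symbol and the residue pairing (ζ;ξ] = res(ξ·dζ/ζ)
jointly separate elements of K* for K = k((τ)), char k = 0. -/
theorem tame_and_residue_pairings_separate (k : Type) [Field k] [CharZero k]
    (ζ : LS k) (h0 : ζ ≠ 0)
    (h1 : ∀ ξ : LS k, ξ ≠ 0 → tame1 ζ ξ = 1)
    (h2 : ∀ ξ : LS k, res1 (ξ * lsDeriv ζ * ζ⁻¹) = 0) :
    ζ = 1 := by
  -- Step 1: lsDeriv ζ * ζ⁻¹ = 0, since all its coefficients are residues.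
  have hg : lsDeriv ζ * ζ⁻¹ = 0 := by
    ext n
    set b : ℤ := -1 - n with hb
    have := h2 (HahnSeries.single b (1 : k))
    rw [res1, mul_assoc, show (-1 : ℤ) = n + b by rw [hb]; ring,
      HahnSeries.coeff_single_mul_add, one_mul] at this
    simpa using this
  have hinv : (ζ⁻¹ : LS k) ≠ 0 := inv_ne_zero h0
  have hd : lsDeriv ζ = 0 := by
    rcases mul_eq_zero.mp hg with h | h
    · exact h
    · exact absurd h hinv
  -- Step 2: ζ is a constant.
  have hcoeff : ∀ m : ℤ, m ≠ 0 → ζ.coeff m = 0 := by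
    intro m hm
    have := congrArg (fun f : LS k => f.coeff (m - 1)) hd
    simp only [lsDeriv, HahnSeries.coeff_zero] at this
    rw [show m - 1 + 1 = m by ring] at this
    have : (m : ℤ) • ζ.coeff m = 0 := this
    rcases smul_eq_zero.mp this with h | h
    · exact absurd h hm
    · exact h
  set c := ζ.coeff 0 with hc
  have hζ : ζ = HahnSeries.single 0 c := by
    ext m
    by_cases hm : m = 0
    · subst hm; simp [HahnSeries.coeff_single, hc]
    · rw [hcoeff m hm, HahnSeries.coeff_single_of_ne hm]
  have hcne : c ≠ 0 := by
    intro h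
    apply h0
    rw [hζ, h]
    simp
  -- Step 3: use the tame symbol with ξ = τ.
  have hτ : (HahnSeries.single 1 1 : LS k) ≠ 0 :=
    HahnSeries.single_ne_zero one_ne_zero
  have ht := h1 (HahnSeries.single 1 1) hτ
  have hordζ : ζ.order = 0 := by rw [hζ]; exact HahnSeries.order_single hcne
  have hordτ : (HahnSeries.single 1 1 : LS k).order = 1 :=
    HahnSeries.order_single one_ne_zero
  rw [tame1, hordζ, hordτ] at ht
  simp only [mul_one, zero_mul, pow_zero, one_mul, neg_zero, zpow_zero, zpow_one] at ht
  rw [hζ] at ht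
  simp only [HahnSeries.coeff_single_same] at ht
  rw [hζ]
  have : c = 1 := by simpa using ht
  rw [this]
  simp


end
end

section
/- Let K = k((t))((u)) be a two-dimensional local field with residue field K̄ = k((t)) (char k = 0). Then for any ξ ∈ K̄ with ν_t(ξ) ≥ 0, and any f, g ∈ K*: res_{K̄/k}(ξ · d(f,g)_K/(f,g)_K) = res_{K/k}(ξ · (df/f) ∧ (dg/g)), where (f,g)_K is the tame symbol with respect to the valuation in u, and res_{K/k}(Σ a_{i,j} t^i u^j dt∧du) = a_{−1,−1}. -/
noncomputable section

variable {k : Type} [Field k]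

/-- The tame symbol of K = k((t))((u)) with respect to the u-adic (outer) valuation,
with values in the residue field K̄ = k((t)). -/
def tame2 {k : Type} [Field k] (f g : LS2 k) : LS k :=
  (-1 : LS k) ^ (f.order * g.order) * (f ^ g.order * g ^ (-f.order)).coeff 0

/-!
Let `a = ν(f)`, `b = ν(g)` and let `c_f, c_g ∈ k((t))` be the leading coefficients of `f, g`
in `u`, the outer variable of `LS2 k` (so `∂ₜ` is `uDeriv` and `∂ᵤ` is `lsDeriv`). Expanding in
`u`, `∂ₜf/f = ∂ₜc_f/c_f + O(u)` and `∂ᵤf/f = a u⁻¹ + O(1)`, and likewise for `g`. Hence the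
coefficient of `u⁻¹` in `(∂ₜf ∂ᵤg - ∂ᵤf ∂ₜg)/(fg)` is `b ∂ₜc_f/c_f - a ∂ₜc_g/c_g`, the logarithmic
derivative of `(f,g)_K = (-1)^{ab} c_f^b c_g^{-a}`.
-/

open HahnSeries

namespace HahnSeries

variable {Γ R : Type*}

/-- `x = c X^m + (higher terms)`, where `c = 0` is allowed. -/
def StartsWith [PartialOrder Γ] [Zero R] (x : HahnSeries Γ R) (m : Γ) (c : R) : Prop :=
  (∀ j < m, x.coeff j = 0) ∧ x.coeff m = c

theorem startsWith_one [Zero Γ] [PartialOrder Γ] [Zero R] [One R] :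
    (1 : HahnSeries Γ R).StartsWith 0 1 :=
  ⟨fun _ hj => by rw [coeff_one, if_neg hj.ne], by rw [coeff_one, if_pos rfl]⟩

section LinearOrder

variable [Zero Γ] [LinearOrder Γ] [Zero R]

theorem startsWith_order_leadingCoeff (x : HahnSeries Γ R) :
    x.StartsWith x.order x.leadingCoeff :=
  ⟨fun _ => coeff_eq_zero_of_lt_order, leadingCoeff_eq.symm⟩

theorem StartsWith.order_eq {x : HahnSeries Γ R} {m : Γ} {c : R}
    (h : x.StartsWith m c) (hc : c ≠ 0) : x.order = m :=
  le_antisymm (order_le_of_coeff_ne_zero (h.2 ▸ hc)) <| not_lt.1 fun hlt =>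
    coeff_order_eq_zero.not.2 (fun hx => hc (by rw [← h.2, hx, coeff_zero])) (h.1 _ hlt)

end LinearOrder

section OrderedMonoid

variable [AddCommMonoid Γ] [LinearOrder Γ] [IsOrderedCancelAddMonoid Γ]

theorem StartsWith.mul [NonUnitalNonAssocSemiring R] {x y : HahnSeries Γ R} {m n : Γ} {c d : R}
    (hx : x.StartsWith m c) (hy : y.StartsWith n d) : (x * y).StartsWith (m + n) (c * d) := by
  have bounds : ∀ {l : Γ} {ij : Γ × Γ},
      ij ∈ Finset.antidiagonal x.isPWO_support y.isPWO_support l →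
        m ≤ ij.1 ∧ n ≤ ij.2 ∧ ij.1 + ij.2 = l := by
    intro l ij hij
    obtain ⟨hi, hj, hsum⟩ := Finset.mem_antidiagonal.1 hij
    exact ⟨not_lt.1 fun h => hi (hx.1 _ h), not_lt.1 fun h => hj (hy.1 _ h), hsum⟩
  refine ⟨fun l hl => ?_, ?_⟩
  · rw [coeff_mul]
    refine Finset.sum_eq_zero fun ij hij => ?_
    obtain ⟨hi, hj, hsum⟩ := bounds hij
    exact absurd (hsum ▸ add_le_add hi hj) (not_le.2 hl)
  · rw [coeff_mul, Finset.sum_eq_single (m, n), hx.2, hy.2]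
    · intro ij hij hne
      obtain ⟨hi, hj, hsum⟩ := bounds hij
      refine absurd (Prod.ext ?_ ?_) hne
      · exact le_antisymm (not_lt.1 fun h => (add_lt_add_of_lt_of_le h hj).ne' hsum) hi
      · exact le_antisymm (not_lt.1 fun h => (add_lt_add_of_le_of_lt hi h).ne' hsum) hj
    · intro hmn
      simp only [Finset.mem_antidiagonal, mem_support, ne_eq, and_true, not_and_or,
        not_not] at hmn
      rcases hmn with h | h <;> simp [h]

theorem StartsWith.pow [Semiring R] {x : HahnSeries Γ R} {m : Γ} {c : R}
    (h : x.StartsWith m c) (n : ℕ) : (x ^ n).StartsWith (n • m) (c ^ n) := by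
  induction n with
  | zero => simpa using startsWith_one
  | succ n ih => simpa [pow_succ, succ_nsmul] using ih.mul h

end OrderedMonoid

section Field

variable [AddCommGroup Γ] [LinearOrder Γ] [IsOrderedAddMonoid Γ] [Field R]

theorem StartsWith.inv {x : HahnSeries Γ R} {m : Γ} {c : R} (h : x.StartsWith m c)
    (hc : c ≠ 0) : x⁻¹.StartsWith (-m) c⁻¹ := by
  have hx : x ≠ 0 := fun hx => hc (by rw [← h.2, hx, coeff_zero])
  have hprod := h.mul (startsWith_order_leadingCoeff x⁻¹)
  rw [mul_inv_cancel₀ hx] at hprod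
  have hlc : c * x⁻¹.leadingCoeff ≠ 0 :=
    mul_ne_zero hc (leadingCoeff_ne_zero.2 (inv_ne_zero hx))
  have horder : m + x⁻¹.order = 0 := by rw [← hprod.order_eq hlc, order_one]
  have hcoeff : c * x⁻¹.leadingCoeff = 1 := by
    rw [← hprod.2, horder, coeff_one, if_pos rfl]
  rw [← eq_neg_of_add_eq_zero_right horder, ← eq_inv_of_mul_eq_one_right hcoeff]
  exact startsWith_order_leadingCoeff x⁻¹

theorem StartsWith.zpow {x : HahnSeries Γ R} {m : Γ} {c : R} (h : x.StartsWith m c)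
    (hc : c ≠ 0) (n : ℤ) : (x ^ n).StartsWith (n • m) (c ^ n) := by
  cases n with
  | ofNat n => simpa using h.pow n
  | negSucc n =>
    simpa [zpow_negSucc, negSucc_zsmul] using (h.pow (n + 1)).inv (pow_ne_zero _ hc)

end Field

end HahnSeries

section LaurentDerivative

variable {R : Type}

theorem lsDeriv_startsWith [AddCommGroup R] {f : LaurentSeries R} {m : ℤ} {c : R}
    (h : f.StartsWith m c) : (lsDeriv f).StartsWith (m - 1) (m • c) := by
  refine ⟨fun j hj => ?_, ?_⟩
  · change (j + 1) • f.coeff (j + 1) = 0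
    rw [h.1 _ (by omega), smul_zero]
  · change (m - 1 + 1) • f.coeff (m - 1 + 1) = m • c
    rw [sub_add_cancel, h.2]

theorem coeff_single_one_mul_lsDeriv [Ring R] (f : LaurentSeries R) (n : ℤ) :
    (single 1 1 * lsDeriv f).coeff n = n • f.coeff n := by
  have h := coeff_single_mul_add (r := (1 : R)) (x := lsDeriv f) (a := n - 1) (b := 1)
  rw [sub_add_cancel, one_mul] at h
  rw [h]
  change (n - 1 + 1) • f.coeff (n - 1 + 1) = n • f.coeff n
  rw [sub_add_cancel]

/- `X • d/dX` multiplies the coefficient of `X^n` by `n`, so its Leibniz rule holds term by term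
in the product formula. -/
theorem single_one_mul_lsDeriv_mul [CommRing R] (f g : LaurentSeries R) :
    single 1 1 * lsDeriv (f * g) = single 1 1 * lsDeriv f * g + f * (single 1 1 * lsDeriv g) := by
  have support_subset (h : LaurentSeries R) : (single 1 1 * lsDeriv h).support ⊆ h.support :=
    fun n hn hzero => hn (by rw [coeff_single_one_mul_lsDeriv, hzero, smul_zero])
  ext n
  rw [coeff_add, coeff_single_one_mul_lsDeriv, coeff_mul, Finset.smul_sum,
    coeff_mul_left' f.isPWO_support (support_subset f),
    coeff_mul_right' g.isPWO_support (support_subset g), ← Finset.sum_add_distrib]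
  refine Finset.sum_congr rfl fun ij hij => ?_
  rw [coeff_single_one_mul_lsDeriv, coeff_single_one_mul_lsDeriv,
    ← (Finset.mem_antidiagonal.1 hij).2.2, add_smul, smul_mul_assoc, mul_smul_comm]

theorem lsDeriv_mul [CommRing R] (f g : LaurentSeries R) :
    lsDeriv (f * g) = lsDeriv f * g + f * lsDeriv g := by
  have hX : (single (-1) 1 : LaurentSeries R) * single 1 1 = 1 := by
    rw [single_mul_single, neg_add_cancel, one_mul, single_zero_one]
  calc lsDeriv (f * g) = single (-1) 1 * (single 1 1 * lsDeriv (f * g)) := by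
        rw [← mul_assoc, hX, one_mul]
    _ = lsDeriv f * g + f * lsDeriv g := by
        rw [single_one_mul_lsDeriv_mul]
        linear_combination (lsDeriv f * g + f * lsDeriv g) * hX

theorem lsDeriv_one [CommRing R] : lsDeriv (1 : LaurentSeries R) = 0 := by
  simpa using lsDeriv_mul (1 : LaurentSeries R) 1

theorem lsDeriv_neg [AddCommGroup R] (f : LaurentSeries R) : lsDeriv (-f) = -lsDeriv f := by
  ext n
  exact smul_neg _ _

end LaurentDerivative

section LogDeriv

variable {K : Type} [Field K]

def lsLogDeriv (f : LaurentSeries K) : LaurentSeries K := lsDeriv f * f⁻¹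

theorem lsLogDeriv_mul {f g : LaurentSeries K} (hf : f ≠ 0) (hg : g ≠ 0) :
    lsLogDeriv (f * g) = lsLogDeriv f + lsLogDeriv g := by
  simp only [lsLogDeriv, lsDeriv_mul, mul_inv]
  field_simp

theorem lsLogDeriv_inv {f : LaurentSeries K} (hf : f ≠ 0) : lsLogDeriv f⁻¹ = -lsLogDeriv f := by
  have h := lsLogDeriv_mul hf (inv_ne_zero hf)
  rw [mul_inv_cancel₀ hf, lsLogDeriv, lsDeriv_one, zero_mul] at h
  exact eq_neg_of_add_eq_zero_right h.symm

theorem lsLogDeriv_zpow {f : LaurentSeries K} (hf : f ≠ 0) (n : ℤ) :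
    lsLogDeriv (f ^ n) = n • lsLogDeriv f := by
  have lsLogDeriv_pow (n : ℕ) : lsLogDeriv (f ^ n) = n • lsLogDeriv f := by
    induction n with
    | zero => simp [lsLogDeriv, lsDeriv_one]
    | succ n ih => rw [pow_succ, lsLogDeriv_mul (pow_ne_zero n hf) hf, ih, succ_nsmul]
  cases n with
  | ofNat n => simpa using lsLogDeriv_pow n
  | negSucc n =>
    rw [zpow_negSucc, lsLogDeriv_inv (pow_ne_zero _ hf), lsLogDeriv_pow, negSucc_zsmul]

theorem lsLogDeriv_neg_one_zpow (n : ℤ) : lsLogDeriv ((-1 : LaurentSeries K) ^ n) = 0 := by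
  rw [lsLogDeriv_zpow (neg_ne_zero.2 one_ne_zero), lsLogDeriv, lsDeriv_neg, lsDeriv_one]
  simp

theorem lsLogDeriv_startsWith {f : LaurentSeries K} (hf : f ≠ 0) :
    (lsLogDeriv f).StartsWith (-1) (f.order : K) := by
  have h := (lsDeriv_startsWith (startsWith_order_leadingCoeff f)).mul
    ((startsWith_order_leadingCoeff f).inv (leadingCoeff_ne_zero.2 hf))
  rwa [show f.order - 1 + -f.order = -1 by ring, smul_mul_assoc,
    mul_inv_cancel₀ (leadingCoeff_ne_zero.2 hf), zsmul_one] at h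

end LogDeriv

section TwoDimensional

theorem uDeriv_startsWith {f : LS2 k} {m : ℤ} {c : LS k} (h : f.StartsWith m c) :
    (uDeriv f).StartsWith m (lsDeriv c) := by
  refine ⟨fun j hj => ?_, ?_⟩
  · change lsDeriv (f.coeff j) = 0
    rw [h.1 j hj, lsDeriv_zero]
  · change lsDeriv (f.coeff m) = lsDeriv c
    rw [h.2]

theorem uDeriv_mul_inv_startsWith {f : LS2 k} (hf : f ≠ 0) :
    (uDeriv f * f⁻¹).StartsWith 0 (lsLogDeriv f.leadingCoeff) := by
  have h := (uDeriv_startsWith (startsWith_order_leadingCoeff f)).mul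
    ((startsWith_order_leadingCoeff f).inv (leadingCoeff_ne_zero.2 hf))
  rwa [add_neg_cancel] at h

theorem tame2_eq_leadingCoeff {f g : LS2 k} (hf : f ≠ 0) (hg : g ≠ 0) :
    tame2 f g = (-1) ^ (f.order * g.order) *
      (f.leadingCoeff ^ g.order * g.leadingCoeff ^ (-f.order)) := by
  have h := ((startsWith_order_leadingCoeff f).zpow (leadingCoeff_ne_zero.2 hf) g.order).mul
    ((startsWith_order_leadingCoeff g).zpow (leadingCoeff_ne_zero.2 hg) (-f.order))
  rw [show g.order • f.order + -f.order • g.order = 0 by simp [mul_comm]] at h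
  rw [tame2, h.2]

theorem lsLogDeriv_tame2 {f g : LS2 k} (hf : f ≠ 0) (hg : g ≠ 0) :
    lsLogDeriv (tame2 f g) =
      g.order • lsLogDeriv f.leadingCoeff - f.order • lsLogDeriv g.leadingCoeff := by
  have hcf := leadingCoeff_ne_zero.2 hf
  have hcg := leadingCoeff_ne_zero.2 hg
  rw [tame2_eq_leadingCoeff hf hg, lsLogDeriv_mul (zpow_ne_zero _ (neg_ne_zero.2 one_ne_zero))
      (mul_ne_zero (zpow_ne_zero _ hcf) (zpow_ne_zero _ hcg)),
    lsLogDeriv_neg_one_zpow, zero_add, lsLogDeriv_mul (zpow_ne_zero _ hcf) (zpow_ne_zero _ hcg),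
    lsLogDeriv_zpow hcf, lsLogDeriv_zpow hcg, neg_smul, sub_eq_add_neg]

theorem wedge_coeff_neg_one {f g : LS2 k} (hf : f ≠ 0) (hg : g ≠ 0) :
    (wedge f g).coeff (-1) = lsLogDeriv (tame2 f g) := by
  have hW : wedge f g = (uDeriv f * f⁻¹) * lsLogDeriv g - lsLogDeriv f * (uDeriv g * g⁻¹) := by
    rw [wedge, tDeriv, tDeriv, lsLogDeriv, lsLogDeriv, mul_inv]
    ring
  have h₁ := (uDeriv_mul_inv_startsWith hf).mul (lsLogDeriv_startsWith hg)
  have h₂ := (lsLogDeriv_startsWith hf).mul (uDeriv_mul_inv_startsWith hg)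
  rw [zero_add] at h₁
  rw [add_zero] at h₂
  rw [hW, coeff_sub, h₁.2, h₂.2, lsLogDeriv_tame2 hf hg, zsmul_eq_mul, zsmul_eq_mul]
  ring

end TwoDimensional

theorem residue_of_tame_symbol_general (k : Type) [Field k] (f g : LS2 k)
    (hf : f ≠ 0) (hg : g ≠ 0) (ξ : LS k) :
    res1 (ξ * lsDeriv (tame2 f g) * (tame2 f g)⁻¹) =
      res2 ((HahnSeries.C ξ) * ((f * g)⁻¹ *
        (uDeriv f * lsDeriv g - lsDeriv f * uDeriv g))) := by
  change (ξ * lsDeriv (tame2 f g) * (tame2 f g)⁻¹).coeff (-1) =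
    ((C ξ * wedge f g).coeff (-1)).coeff (-1)
  rw [C_mul_eq_smul, HahnSeries.coeff_smul, smul_eq_mul, wedge_coeff_neg_one hf hg, lsLogDeriv,
    mul_assoc]

/-- for ξ ∈ K̄ = k((t)) with ν_t(ξ) ≥ 0 and f, g ∈ K*,
res_{K̄/k}(ξ·d(f,g)_K/(f,g)_K) = res_{K/k}(ξ·(df/f)∧(dg/g)).
Here `LS2 k` realizes k((t))((u)) with outer variable u and inner variable t;
`uDeriv` is ∂/∂t (coefficientwise) and `lsDeriv` is ∂/∂u (outer), `res2` extracts
the coefficient of t⁻¹u⁻¹, and `HahnSeries.C ξ` is the embedding k((t)) ⊂ K. -/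
theorem residue_of_tame_symbol (k : Type) [Field k] [CharZero k] (f g : LS2 k)
    (hf : f ≠ 0) (hg : g ≠ 0) (ξ : LS k) (hξ : ∀ j < 0, ξ.coeff j = 0) :
    res1 (ξ * lsDeriv (tame2 f g) * (tame2 f g)⁻¹) =
      res2 ((HahnSeries.C ξ) * ((f * g)⁻¹ *
        (uDeriv f * lsDeriv g - lsDeriv f * uDeriv g))) :=
  residue_of_tame_symbol_general k f g hf hg ξ

end
end

section
/- Let K = k((u))((t)) with char k = 0, with valuation ν_K and residue field K̄ = k((u)) with its valuation ν_{K̄}; let π : O_K → K̄ be reduction. Then for all φ, ψ ∈ K* one has res_{K/k}((dφ/φ) ∧ (dψ/ψ)) = det [[ν_{K̄}(π(φ₀)), ν_K(φ)], [ν_{K̄}(π(ψ₀)), ν_K(ψ)]], where φ₀ = φ·t^{−ν_K(φ)} and ψ₀ = ψ·t^{−ν_K(ψ)} are the unit parts; i.e., the total residue of dφ/φ ∧ dψ/ψ equals the 2×2 determinant of the bivaluation vectors of φ and ψ. -/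
noncomputable section

variable {k : Type} [Field k]

/-! Write `φ = t^a f` and `ψ = t^b g` with `f`, `g` units of `k((u))[[t]]`. Since `∂_u` does not see
`t^a` and `d(t^a)/t^a = a dt/t`, the form `dφ/φ ∧ dψ/ψ` is `(b ∂_u f/f - a ∂_u g/g) du ∧ dt/t` plus
`df/f ∧ dg/g`, and the latter has no pole in `t`. The `t⁰`-coefficient of `∂_u f/f` is the
logarithmic derivative `f̄'/f̄` of the reduction `f̄ ∈ k((u))`, whose residue is `ν(f̄)`. -/

open HahnSeries

section LaurentSeries

lemma coeff_eq_zero_of_zero_le_orderTop {A : Type} [Zero A] {x : LaurentSeries A}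
    (hx : 0 ≤ x.orderTop) {j : ℤ} (hj : j < 0) : x.coeff j = 0 :=
  coeff_eq_zero_of_lt_orderTop ((WithTop.coe_lt_coe.mpr hj).trans_le hx)

lemma zero_le_orderTop_lsDeriv {A : Type} [AddCommGroup A] {f : LaurentSeries A}
    (hf : 0 ≤ f.orderTop) : 0 ≤ (lsDeriv f).orderTop := by
  refine le_orderTop_iff_forall.mpr fun j hj => ?_
  have hj : j < 0 := WithTop.coe_lt_coe.mp hj
  change (j + 1) • f.coeff (j + 1) = 0
  rcases eq_or_ne j (-1) with rfl | hj1
  · simp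
  · rw [coeff_eq_zero_of_zero_le_orderTop hf (by omega), smul_zero]

variable {R : Type} [CommRing R]

lemma zero_le_orderTop_mul {x y : LaurentSeries R} (hx : 0 ≤ x.orderTop)
    (hy : 0 ≤ y.orderTop) : 0 ≤ (x * y).orderTop :=
  (add_nonneg hx hy).trans orderTop_add_le_mul

lemma coeff_zero_mul_of_zero_le_orderTop {x y : LaurentSeries R} (hx : 0 ≤ x.orderTop)
    (hy : 0 ≤ y.orderTop) : (x * y).coeff 0 = x.coeff 0 * y.coeff 0 := by
  rw [coeff_mul, Finset.sum_eq_single ((0 : ℤ), (0 : ℤ))]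
  · rintro ⟨i, j⟩ hij hne
    obtain ⟨-, -, hsum⟩ := Finset.mem_antidiagonal.mp hij
    rcases lt_or_ge i 0 with hi | hi
    · rw [coeff_eq_zero_of_zero_le_orderTop hx hi, zero_mul]
    · rw [coeff_eq_zero_of_zero_le_orderTop hy (show j < 0 by grind), mul_zero]
  · intro h0
    by_contra hne
    exact h0 (Finset.mem_antidiagonal.mpr ⟨(mem_support x 0).mpr (left_ne_zero_of_mul hne),
      (mem_support y 0).mpr (right_ne_zero_of_mul hne), add_zero 0⟩)

lemma lsDeriv_single_one_mul (a : ℤ) (f : LaurentSeries R) :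
    lsDeriv (single a 1 * f) = single (a - 1) (a : R) * f + single a 1 * lsDeriv f := by
  ext n
  change (n + 1) • (single a 1 * f).coeff (n + 1) = _
  rw [coeff_add, coeff_single_mul, coeff_single_mul, coeff_single_mul]
  change _ = _ + 1 * ((n - a + 1) • f.coeff (n - a + 1))
  rw [show n + 1 - a = n - a + 1 by ring, show n - (a - 1) = n - a + 1 by ring, zsmul_eq_mul,
    zsmul_eq_mul]
  push_cast
  ring

lemma single_one_mul_single_neg (a : ℤ) : single a (1 : R) * single (-a) 1 = 1 := by
  rw [single_mul_single, add_neg_cancel, one_mul, single_zero_one]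

lemma single_order_mul_mul_single_neg_order (f : LaurentSeries R) :
    single f.order 1 * (f * single (-f.order) 1) = f := by
  rw [mul_left_comm, single_one_mul_single_neg, mul_one]

lemma order_mul_single_neg_order {f : LaurentSeries R} (hf : f ≠ 0) :
    (f * single (-f.order) 1).order = 0 := by
  rw [mul_comm, order_single_mul_of_isRegular isRegular_one hf, neg_add_cancel]

variable {F : Type} [Field F]

lemma zero_le_orderTop_inv {f : LaurentSeries F} (hf : f.order = 0) : 0 ≤ f⁻¹.orderTop := by
  rcases eq_or_ne f 0 with rfl | hf0
  · simp
  have h := order_mul hf0 (inv_ne_zero hf0)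
  rw [mul_inv_cancel₀ hf0, order_one, hf, zero_add] at h
  exact zero_le_orderTop_iff.mpr h.le

lemma coeff_zero_inv {f : LaurentSeries F} (hf : f.order = 0) : f⁻¹.coeff 0 = (f.coeff 0)⁻¹ := by
  rcases eq_or_ne f 0 with rfl | hf0
  · simp
  refine (inv_eq_of_mul_eq_one_right ?_).symm
  rw [← coeff_zero_mul_of_zero_le_orderTop (zero_le_orderTop_iff.mpr hf.ge)
    (zero_le_orderTop_inv hf), mul_inv_cancel₀ hf0, coeff_one, if_pos rfl]

lemma lsDeriv_single_one_mul_mul_inv (a : ℤ) {h : LaurentSeries F} (hh : h ≠ 0) :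
    lsDeriv (single a 1 * h) * (single a 1 * h)⁻¹ = single (-1) (a : F) + lsDeriv h * h⁻¹ := by
  have hs : single (a - 1) (a : F) = single (-1) (a : F) * single a 1 := by
    rw [single_mul_single, mul_one, neg_add_eq_sub]
  rw [lsDeriv_single_one_mul, mul_inv, inv_single, inv_one, hs]
  linear_combination
    (single (-1) (a : F) * (h * h⁻¹) + lsDeriv h * h⁻¹) * single_one_mul_single_neg (R := F) a
      + single (-1) (a : F) * mul_inv_cancel₀ hh

theorem res1_lsDeriv_mul_inv {f : LaurentSeries F} (hf : f ≠ 0) :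
    res1 (lsDeriv f * f⁻¹) = f.order := by
  set h := f * single (-f.order) 1
  have hh : h.order = 0 := order_mul_single_neg_order hf
  have hh0 : 0 ≤ h.orderTop := zero_le_orderTop_iff.mpr hh.ge
  have key := lsDeriv_single_one_mul_mul_inv f.order (h := h)
    (mul_ne_zero hf (single_ne_zero one_ne_zero))
  rw [single_order_mul_mul_single_neg_order] at key
  rw [res1, key, coeff_add, coeff_single_same, coeff_eq_zero_of_zero_le_orderTop
    (zero_le_orderTop_mul (zero_le_orderTop_lsDeriv hh0) (zero_le_orderTop_inv hh)) (by norm_num),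
    add_zero]

end LaurentSeries

section TwoDimensional

lemma uDeriv_single_one_mul (a : ℤ) (f : LS2 k) :
    uDeriv (single a 1 * f) = single a 1 * uDeriv f := by
  ext j : 2
  change lsDeriv ((single a 1 * f).coeff j) = (single a 1 * uDeriv f).coeff j
  rw [coeff_single_mul, coeff_single_mul, one_mul, one_mul]
  rfl

lemma zero_le_orderTop_uDeriv {f : LS2 k} (hf : 0 ≤ f.orderTop) : 0 ≤ (uDeriv f).orderTop := by
  refine le_orderTop_iff_forall.mpr fun j hj => ?_
  change lsDeriv (f.coeff j) = 0
  rw [coeff_eq_zero_of_zero_le_orderTop hf (WithTop.coe_lt_coe.mp hj), lsDeriv_zero]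

lemma coeff_zero_uDeriv_mul_inv {f : LS2 k} (hf : f.order = 0) :
    (uDeriv f * f⁻¹).coeff 0 = lsDeriv (f.coeff 0) * (f.coeff 0)⁻¹ := by
  rw [coeff_zero_mul_of_zero_le_orderTop
    (zero_le_orderTop_uDeriv (zero_le_orderTop_iff.mpr hf.ge)) (zero_le_orderTop_inv hf),
    coeff_zero_inv hf]
  rfl

lemma wedge_eq (φ ψ : LS2 k) :
    wedge φ ψ = uDeriv φ * φ⁻¹ * (tDeriv ψ * ψ⁻¹) - tDeriv φ * φ⁻¹ * (uDeriv ψ * ψ⁻¹) := by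
  rw [wedge, mul_inv]
  ring

lemma wedge_single_one_mul (a b : ℤ) {f g : LS2 k} (hf : f ≠ 0) (hg : g ≠ 0) :
    wedge (single a 1 * f) (single b 1 * g) =
      single (-1) (b : LS k) * (uDeriv f * f⁻¹) - single (-1) (a : LS k) * (uDeriv g * g⁻¹)
        + wedge f g := by
  have hu (c : ℤ) (h : LS2 k) : uDeriv (single c 1 * h) * (single c 1 * h)⁻¹ = uDeriv h * h⁻¹ := by
    rw [uDeriv_single_one_mul, mul_inv, inv_single, inv_one]
    linear_combination (uDeriv h * h⁻¹) * single_one_mul_single_neg (R := LS k) c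
  simp only [wedge_eq, tDeriv, hu, lsDeriv_single_one_mul_mul_inv _ hf,
    lsDeriv_single_one_mul_mul_inv _ hg]
  ring

lemma res2_add (x y : LS2 k) : res2 (x + y) = res2 x + res2 y := rfl

lemma res2_sub (x y : LS2 k) : res2 (x - y) = res2 x - res2 y := rfl

lemma res2_wedge_of_order_eq_zero {f g : LS2 k} (hf : f.order = 0) (hg : g.order = 0) :
    res2 (wedge f g) = 0 := by
  have hf' := zero_le_orderTop_iff.mpr hf.ge
  have hg' := zero_le_orderTop_iff.mpr hg.ge
  have huf : 0 ≤ (uDeriv f * f⁻¹).orderTop :=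
    zero_le_orderTop_mul (zero_le_orderTop_uDeriv hf') (zero_le_orderTop_inv hf)
  have hug : 0 ≤ (uDeriv g * g⁻¹).orderTop :=
    zero_le_orderTop_mul (zero_le_orderTop_uDeriv hg') (zero_le_orderTop_inv hg)
  have htf : 0 ≤ (tDeriv f * f⁻¹).orderTop :=
    zero_le_orderTop_mul (zero_le_orderTop_lsDeriv hf') (zero_le_orderTop_inv hf)
  have htg : 0 ≤ (tDeriv g * g⁻¹).orderTop :=
    zero_le_orderTop_mul (zero_le_orderTop_lsDeriv hg') (zero_le_orderTop_inv hg)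
  have hw : 0 ≤ (wedge f g).orderTop := by
    rw [wedge_eq]
    exact (le_min (zero_le_orderTop_mul huf htg) (zero_le_orderTop_mul htf hug)).trans
      min_orderTop_le_orderTop_sub
  rw [res2, coeff_eq_zero_of_zero_le_orderTop hw (by norm_num), coeff_zero]

lemma res2_single_neg_one_intCast_mul (n : ℤ) (x : LS2 k) :
    res2 (single (-1) (n : LS k) * x) = n * res1 (x.coeff 0) := by
  rw [res2, coeff_single_mul, sub_self, ← single_zero_intCast, coeff_single_zero_mul, res1]

lemma tElem_zpow (n : ℤ) : (tElem : LS2 k) ^ n = single n 1 :=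
  (RatFunc.single_zpow n).symm

end TwoDimensional

theorem total_residue_eq_det_general (k : Type) [Field k] (φ ψ : LS2 k)
    (hφ : φ ≠ 0) (hψ : ψ ≠ 0) :
    res2 (wedge φ ψ) =
      ((((φ * tElem ^ (-φ.order)).coeff 0).order * ψ.order
        - φ.order * (((ψ * tElem ^ (-ψ.order)).coeff 0).order) : ℤ) : k) := by
  rw [tElem_zpow, tElem_zpow]
  set f := φ * single (-φ.order) 1
  set g := ψ * single (-ψ.order) 1
  have hf : f.order = 0 := order_mul_single_neg_order hφ
  have hg : g.order = 0 := order_mul_single_neg_order hψ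
  have hf_ne : f ≠ 0 := mul_ne_zero hφ (single_ne_zero one_ne_zero)
  have hg_ne : g ≠ 0 := mul_ne_zero hψ (single_ne_zero one_ne_zero)
  have hf_coeff : f.coeff 0 ≠ 0 := hf ▸ coeff_order_eq_zero.not.mpr hf_ne
  have hg_coeff : g.coeff 0 ≠ 0 := hg ▸ coeff_order_eq_zero.not.mpr hg_ne
  have hφf : single φ.order 1 * f = φ := single_order_mul_mul_single_neg_order φ
  have hψg : single ψ.order 1 * g = ψ := single_order_mul_mul_single_neg_order ψ
  conv_lhs => rw [← hφf, ← hψg]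
  rw [wedge_single_one_mul _ _ hf_ne hg_ne, res2_add, res2_sub, res2_wedge_of_order_eq_zero hf hg,
    res2_single_neg_one_intCast_mul, res2_single_neg_one_intCast_mul,
    coeff_zero_uDeriv_mul_inv hf, coeff_zero_uDeriv_mul_inv hg,
    res1_lsDeriv_mul_inv hf_coeff, res1_lsDeriv_mul_inv hg_coeff]
  push_cast
  ring

/-- res_{K/k}((dφ/φ)∧(dψ/ψ)) equals the determinant of the
bivaluation vectors of φ and ψ, for K = k((u))((t)), char k = 0. -/
theorem total_residue_eq_det (k : Type) [Field k] [CharZero k] (φ ψ : LS2 k)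
    (hφ : φ ≠ 0) (hψ : ψ ≠ 0) :
    res2 (wedge φ ψ) =
      ((((φ * tElem ^ (-φ.order)).coeff 0).order * ψ.order
        - φ.order * (((ψ * tElem ^ (-ψ.order)).coeff 0).order) : ℤ) : k) :=
  total_residue_eq_det_general k φ ψ hφ hψ

end
end
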